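/- (Proposition 2.2, part 2.) Let s ∈ ℝ with s > 1, and let z ∈ ℍ satisfy im z < 1 and im(δ·z) ≤ 1 for every δ ∈ Γ. Assume there exists U > 0 such that for every t ≥ 0 the set A(z,t) is finite with Π(z,t) ≤ U·e^t. Then every set A(h,z,t), t ≥ 0, is finite, and E(z,s) = s · ∫₀^∞ e^{−s t} · Π(h,z,t) dt, where the integral is the Lebesgue integral over [0,∞) of the real-valued function t ↦ e^{−s t}·Π(h,z,t). -/

import Mathlib

/-!
For a coset `q` put `a q = -log im (δ·z)`, `δ` any representative; `a q ≥ 0` since `im (δ·z) ≤ 1`.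
Translating by a power of `T` moves `δ·z` into the strip `-1/2 ≤ re < 1/2` without changing its
imaginary part, and there the hyperbolic distance to the horocycle segment is exactly
`-log im`, so `A(h,z,t) = {q | a q ≤ t}`. As the segment contains `i` and has diameter at most
`1`, `A(h,z,t) ⊆ A(z,t+1)` is finite. Now `E(z,s) = ∑ e^{-s a q}`, and the claim is the layer-cake
identity `∑ e^{-s a q} = s ∫₀^∞ e^{-st} #{q | a q ≤ t} dt`, obtained by exchanging sum and
integral in `ℝ≥0∞`.
-/

open scoped UpperHalfPlane MatrixGroups
open UpperHalfPlane

noncomputable section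

/-- The parabolic element `T = [[1,1],[0,1]]` of `SL(2,ℝ)`, acting on `ℍ` by `z ↦ z + 1`. -/
def T : SL(2, ℝ) := ⟨!![1, 1; 0, 1], by norm_num [Matrix.det_fin_two_of]⟩

/-- The horocycle segment `h ⊆ ℍ`: points with `-1/2 ≤ re < 1/2` and `im = 1`. -/
def horocycle : Set ℍ := {w : ℍ | -(1 / 2) ≤ w.re ∧ w.re < 1 / 2 ∧ w.im = 1}

variable (Γ : Subgroup SL(2, ℝ))

/-- The cyclic subgroup `Γ∞` of `Γ` generated by `T`. -/
abbrev GammaInf (hT : T ∈ Γ) : Subgroup Γ := Subgroup.zpowers ⟨T, hT⟩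

/-- The set of right cosets `Γ∞\Γ`. -/
abbrev Cosets (hT : T ∈ Γ) := Quotient (QuotientGroup.rightRel (GammaInf Γ hT))

variable (hT : T ∈ Γ)

/-- The term `(im (δ·z))^s` of the Eisenstein series attached to a coset `q ∈ Γ∞\Γ`
(`δ` a representative of `q`; the value is independent of the representative). -/
def eisTerm (z : ℍ) (s : ℝ) (q : Cosets Γ hT) : ℝ :=
  (((Quotient.out q : Γ) : SL(2, ℝ)) • z).im ^ s

/-- The Eisenstein series `E(z,s) = ∑'_{q ∈ Γ∞\Γ} (im (δ·z))^s`. -/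
def Eis (z : ℍ) (s : ℝ) : ℝ := ∑' q : Cosets Γ hT, eisTerm Γ hT z s q

/-- `A(z,t)`: the set of cosets `q ∈ Γ∞\Γ` admitting a representative `δ` with
`dist(i, δ·z) ≤ t`. -/
def Aset (z : ℍ) (t : ℝ) : Set (Cosets Γ hT) :=
  {q | ∃ δ : Γ, Quotient.mk (QuotientGroup.rightRel (GammaInf Γ hT)) δ = q ∧
    dist UpperHalfPlane.I ((δ : SL(2, ℝ)) • z) ≤ t}

/-- `A(h,z,t)`: the set of cosets `q ∈ Γ∞\Γ` admitting a representative `δ` with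
`-1/2 ≤ re(δ·z) < 1/2` and `infDist (δ·z) h ≤ t`. -/
def Ahset (z : ℍ) (t : ℝ) : Set (Cosets Γ hT) :=
  {q | ∃ δ : Γ, Quotient.mk (QuotientGroup.rightRel (GammaInf Γ hT)) δ = q ∧
    -(1 / 2) ≤ ((δ : SL(2, ℝ)) • z).re ∧ ((δ : SL(2, ℝ)) • z).re < 1 / 2 ∧
    Metric.infDist ((δ : SL(2, ℝ)) • z) horocycle ≤ t}

open scoped ENNReal
open MeasureTheory Set

theorem Set.Finite.natCast_ncard_eq_tsum_indicator {α : Type*} {S : Set α} (hS : S.Finite) :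
    (S.ncard : ℝ≥0∞) = ∑' a, S.indicator 1 a := by
  rw [← tsum_subtype, Pi.one_def, ENNReal.tsum_set_one, ← hS.cast_ncard_eq]
  rfl

theorem lintegral_Ici_exp_neg_mul {s : ℝ} (hs : 0 < s) (a : ℝ) :
    ∫⁻ t in Ici a, ENNReal.ofReal (Real.exp (-s * t)) = ENNReal.ofReal (Real.exp (-s * a) / s) := by
  rw [← setLIntegral_congr Ioi_ae_eq_Ici, ← ofReal_integral_eq_lintegral_ofReal,
    integral_exp_mul_Ioi (by linarith), neg_div_neg_eq]
  · exact integrableOn_exp_mul_Ioi (by linarith) a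
  · exact ae_of_all _ fun t => (Real.exp_pos _).le

section LayerCake

variable {ι : Type*} {a : ι → ℝ}

theorem countable_of_finite_sublevel (hfin : ∀ t, {i | a i ≤ t}.Finite) : Countable ι := by
  refine Set.countable_univ_iff.mp (Set.Countable.mono (fun i _ => ?_)
    (Set.countable_iUnion fun n : ℕ => (hfin n).countable))
  exact Set.mem_iUnion.mpr ⟨⌈a i⌉₊, Nat.le_ceil (a i)⟩

theorem lintegral_exp_neg_mul_ncard_sublevel {s : ℝ} (hs : 0 < s) (ha : ∀ i, 0 ≤ a i)
    (hfin : ∀ t, {i | a i ≤ t}.Finite) :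
    ENNReal.ofReal s * ∫⁻ t in Ioi 0, ENNReal.ofReal (Real.exp (-s * t)) * {i | a i ≤ t}.ncard =
      ∑' i, ENNReal.ofReal (Real.exp (-s * a i)) := by
  have := countable_of_finite_sublevel hfin
  let f : ℝ → ℝ≥0∞ := fun t => ENNReal.ofReal (Real.exp (-s * t))
  have hf : Measurable f := by fun_prop
  have hpt : ∀ t, f t * {i | a i ≤ t}.ncard = ∑' i, (Ici (a i)).indicator f t := by
    intro t
    rw [(hfin t).natCast_ncard_eq_tsum_indicator, ← ENNReal.tsum_mul_left]
    refine tsum_congr fun i => ?_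
    by_cases hi : a i ≤ t <;> simp [hi]
  calc ENNReal.ofReal s * ∫⁻ t in Ioi 0, f t * {i | a i ≤ t}.ncard
      = ENNReal.ofReal s * ∑' i, ∫⁻ t in Ici (a i), f t := by
        rw [setLIntegral_congr Ioi_ae_eq_Ici, lintegral_congr hpt,
          lintegral_tsum fun i => (hf.indicator measurableSet_Ici).aemeasurable]
        congr 1
        refine tsum_congr fun i => ?_
        rw [lintegral_indicator measurableSet_Ici, Measure.restrict_restrict measurableSet_Ici,
          inter_eq_left.mpr (Ici_subset_Ici.mpr (ha i))]
    _ = ∑' i, ENNReal.ofReal (Real.exp (-s * a i)) := by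
        simp_rw [f, lintegral_Ici_exp_neg_mul hs, ← ENNReal.tsum_mul_left,
          ← ENNReal.ofReal_mul hs.le, mul_div_cancel₀ _ hs.ne']

theorem tsum_exp_neg_mul_eq_integral_ncard_sublevel {s : ℝ} (hs : 0 < s) (ha : ∀ i, 0 ≤ a i)
    (hfin : ∀ t, {i | a i ≤ t}.Finite) :
    ∑' i, Real.exp (-s * a i) =
      s * ∫ t in Ioi 0, Real.exp (-s * t) * ({i | a i ≤ t}.ncard : ℝ) := by
  have hmono : Monotone fun t => ({i | a i ≤ t}.ncard : ℝ) := fun t u htu =>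
    Nat.cast_le.mpr (Set.ncard_le_ncard (fun i hi => le_trans hi htu) (hfin u))
  have hmeas : Measurable fun t => Real.exp (-s * t) * ({i | a i ≤ t}.ncard : ℝ) :=
    (by fun_prop : Measurable fun t => Real.exp (-s * t)).mul hmono.measurable
  have h := congrArg ENNReal.toReal (lintegral_exp_neg_mul_ncard_sublevel hs ha hfin)
  rw [ENNReal.toReal_mul, ENNReal.toReal_ofReal hs.le,
    ENNReal.tsum_toReal_eq fun _ => ENNReal.ofReal_ne_top] at h
  rw [integral_eq_lintegral_of_nonneg_ae (ae_of_all _ fun t => by positivity)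
    hmeas.aestronglyMeasurable]
  simp_rw [ENNReal.ofReal_mul (Real.exp_pos _).le, ENNReal.ofReal_natCast, h,
    ENNReal.toReal_ofReal (Real.exp_pos _).le]

end LayerCake

theorem T_smul (w : ℍ) : T • w = (1 : ℝ) +ᵥ w := by
  rw [UpperHalfPlane.ext_iff, coe_vadd, specialLinearGroup_apply, coe_mk]
  simp [T]
  ring

theorem T_zpow_smul (n : ℤ) (w : ℍ) : T ^ n • w = (n : ℝ) +ᵥ w := by
  induction n using Int.induction_on generalizing w with
  | zero => simp
  | succ n ih => rw [zpow_add_one, mul_smul, T_smul, ih, vadd_vadd]; push_cast; ring_nf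
  | pred n ih =>
    have hinv : T⁻¹ • w = (-1 : ℝ) +ᵥ w := inv_smul_eq_iff.mpr (by rw [T_smul, vadd_vadd]; simp)
    rw [zpow_sub_one, mul_smul, hinv, ih, vadd_vadd]
    push_cast; ring_nf

theorem dist_le_one_of_mem_horocycle {y y' : ℍ} (hy : y ∈ horocycle) (hy' : y' ∈ horocycle) :
    dist y y' ≤ 1 := by
  obtain ⟨hy₁, hy₂, hy₃⟩ := hy
  obtain ⟨hy'₁, hy'₂, hy'₃⟩ := hy'
  calc dist y y' ≤ dist (y : ℂ) y' / √(y.im * y'.im) := dist_le_dist_coe_div_sqrt y y'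
    _ = |y.re - y'.re| := by
        rw [Complex.dist_of_im_eq (by simp [hy₃, hy'₃]), hy₃, hy'₃]
        simp [Real.dist_eq]
    _ ≤ 1 := abs_le.mpr ⟨by linarith, by linarith⟩

theorem dist_I_le_infDist_horocycle_add_one (w : ℍ) :
    dist I w ≤ Metric.infDist w horocycle + 1 := by
  have hI : I ∈ horocycle := ⟨by simp, by simp, rfl⟩
  have hbdd : Bornology.IsBounded horocycle :=
    Metric.isBounded_iff.mpr ⟨1, fun _ hy _ hy' => dist_le_one_of_mem_horocycle hy hy'⟩
  calc dist I w = dist w I := dist_comm _ _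
    _ ≤ Metric.infDist w horocycle + Metric.diam horocycle :=
        Metric.dist_le_infDist_add_diam hbdd hI
    _ ≤ Metric.infDist w horocycle + 1 := by
        gcongr
        exact Metric.diam_le_of_forall_dist_le zero_le_one
          fun _ hy _ hy' => dist_le_one_of_mem_horocycle hy hy'

theorem infDist_horocycle_eq_neg_log_im {w : ℍ} (hre₁ : -(1 / 2) ≤ w.re) (hre₂ : w.re < 1 / 2)
    (him : w.im ≤ 1) : Metric.infDist w horocycle = -Real.log w.im := by
  set p : ℍ := ⟨⟨w.re, 1⟩, one_pos⟩
  have hp : p ∈ horocycle := ⟨hre₁, hre₂, rfl⟩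
  refine le_antisymm ?_ ((Metric.le_infDist ⟨p, hp⟩).mpr fun y hy => ?_)
  · calc Metric.infDist w horocycle ≤ dist w p := Metric.infDist_le_dist_of_mem hp
      _ = -Real.log w.im := by
        rw [dist_of_re_eq (z := w) (w := p) rfl, show p.im = 1 from rfl, Real.log_one,
          Real.dist_eq, sub_zero, abs_of_nonpos (Real.log_nonpos w.im_pos.le him)]
  · -- the imaginary part changes at most by the factor `exp (dist w y)`
    have := im_le_im_mul_exp_dist y w
    rw [hy.2.2, dist_comm] at this
    rw [neg_le, ← Real.log_exp (-dist w y), Real.log_le_log_iff (Real.exp_pos _) w.im_pos,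
      Real.exp_neg, inv_le_iff_one_le_mul₀' (Real.exp_pos _)]
    linarith

theorem im_smul_eq_of_mk_eq (z : ℍ) {δ δ' : Γ}
    (h : Quotient.mk (QuotientGroup.rightRel (GammaInf Γ hT)) δ =
      Quotient.mk (QuotientGroup.rightRel (GammaInf Γ hT)) δ') :
    ((δ : SL(2, ℝ)) • z).im = ((δ' : SL(2, ℝ)) • z).im := by
  obtain ⟨n, hn⟩ := QuotientGroup.rightRel_apply.mp (Quotient.exact h)
  have hδ' : (δ' : SL(2, ℝ)) = T ^ n * δ := by
    rw [show δ' = (⟨T, hT⟩ : Γ) ^ n * δ by simp only at hn; rw [hn]; group]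
    rfl
  rw [hδ', mul_smul, T_zpow_smul, vadd_im]

theorem exists_mk_eq_re_mem_Ico (z : ℍ) (δ₀ : Γ) :
    ∃ δ : Γ, Quotient.mk (QuotientGroup.rightRel (GammaInf Γ hT)) δ =
        Quotient.mk (QuotientGroup.rightRel (GammaInf Γ hT)) δ₀ ∧
      -(1 / 2) ≤ ((δ : SL(2, ℝ)) • z).re ∧ ((δ : SL(2, ℝ)) • z).re < 1 / 2 := by
  set n : ℤ := -⌊((δ₀ : SL(2, ℝ)) • z).re + 1 / 2⌋
  refine ⟨(⟨T, hT⟩ : Γ) ^ n * δ₀, Quotient.sound (QuotientGroup.rightRel_apply.mpr ⟨-n, by group⟩),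
    ?_⟩
  have hre : ((((⟨T, hT⟩ : Γ) ^ n * δ₀ : Γ) : SL(2, ℝ)) • z).re =
      n + ((δ₀ : SL(2, ℝ)) • z).re := by
    rw [show (((⟨T, hT⟩ : Γ) ^ n * δ₀ : Γ) : SL(2, ℝ)) = T ^ n * δ₀ from rfl, mul_smul,
      T_zpow_smul, vadd_re]
  have h₁ := Int.floor_le (((δ₀ : SL(2, ℝ)) • z).re + 1 / 2)
  have h₂ := Int.lt_floor_add_one (((δ₀ : SL(2, ℝ)) • z).re + 1 / 2)
  rw [hre]
  push_cast [n]
  constructor <;> linarith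

theorem Aset_mono (z : ℍ) : Monotone (Aset Γ hT z) :=
  fun _ _ hst _ ⟨δ, hδ, hdist⟩ => ⟨δ, hδ, hdist.trans hst⟩

theorem Ahset_subset_Aset (z : ℍ) (t : ℝ) : Ahset Γ hT z t ⊆ Aset Γ hT z (t + 1) :=
  fun _ ⟨δ, hδ, _, _, hdist⟩ =>
    ⟨δ, hδ, (dist_I_le_infDist_horocycle_add_one _).trans (by linarith)⟩

theorem Ahset_eq_setOf_neg_log_im_le {z : ℍ} (hzΓ : ∀ δ : Γ, ((δ : SL(2, ℝ)) • z).im ≤ 1)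
    (t : ℝ) :
    Ahset Γ hT z t = {q | -Real.log (((Quotient.out q : Γ) : SL(2, ℝ)) • z).im ≤ t} := by
  ext q
  constructor
  · rintro ⟨δ, rfl, hre₁, hre₂, hdist⟩
    rwa [infDist_horocycle_eq_neg_log_im hre₁ hre₂ (hzΓ δ),
      im_smul_eq_of_mk_eq Γ hT z (Quotient.out_eq _).symm] at hdist
  · intro hq
    obtain ⟨δ, hδ, hre₁, hre₂⟩ := exists_mk_eq_re_mem_Ico Γ hT z (Quotient.out q)
    refine ⟨δ, hδ.trans (Quotient.out_eq q), hre₁, hre₂, ?_⟩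
    rwa [infDist_horocycle_eq_neg_log_im hre₁ hre₂ (hzΓ δ), im_smul_eq_of_mk_eq Γ hT z hδ]

theorem eisenstein_eq_integral (s : ℝ) (hs : 1 < s) (z : ℍ)
    (hzΓ : ∀ δ : Γ, ((δ : SL(2, ℝ)) • z).im ≤ 1)
    (U : ℝ)
    (hPi : ∀ t : ℝ, 0 ≤ t →
      (Aset Γ hT z t).Finite ∧ ((Aset Γ hT z t).ncard : ℝ) ≤ U * Real.exp t) :
    (∀ t : ℝ, 0 ≤ t → (Ahset Γ hT z t).Finite) ∧
      Eis Γ hT z s =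
        s * ∫ t in Set.Ioi (0 : ℝ), Real.exp (-s * t) * ((Ahset Γ hT z t).ncard : ℝ) := by
  have hfin : ∀ t, (Ahset Γ hT z t).Finite := fun t =>
    (hPi (|t| + 1) (by positivity)).1.subset <| (Ahset_subset_Aset Γ hT z t).trans
      (Aset_mono Γ hT z (by linarith [le_abs_self t]))
  refine ⟨fun t _ => hfin t, ?_⟩
  simp_rw [Ahset_eq_setOf_neg_log_im_le Γ hT hzΓ] at hfin ⊢
  have ha : ∀ q : Cosets Γ hT, 0 ≤ -Real.log (((Quotient.out q : Γ) : SL(2, ℝ)) • z).im :=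
    fun q => neg_nonneg.mpr (Real.log_nonpos (im_pos _).le (hzΓ _))
  rw [← tsum_exp_neg_mul_eq_integral_ncard_sublevel (by linarith) ha hfin]
  refine tsum_congr fun q => ?_
  rw [eisTerm, Real.rpow_def_of_pos (im_pos _), neg_mul_neg, mul_comm]
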